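/- arXiv:math/0010090 — 2 statements merged into one kernel-verified Lean document; each statement's English description precedes it below -/
import Mathlib

section
/- A nonlinear connection Γ on the 1-jet bundle J^1(R,M) (i.e. a distribution on J^1(R,M) complementary to the vertical distribution of the projection onto R×M) is determined by a pair of families of local functions M^{(i)}_{(1)1}(t,x,y) and N^{(i)}_{(1)j}(t,x,y) which under the induced jet coordinate change transform by M̃^{(j)}_{(1)1}(dt̃/dt) = M^{(k)}_{(1)1}(dt/dt̃)(∂x̃^j/∂x^k) − ∂ỹ^j/∂t and Ñ^{(j)}_{(1)k}(∂x̃^k/∂x^i) = N^{(k)}_{(1)i}(dt/dt̃)(∂x̃^j/∂x^k) − ∂ỹ^j/∂x^i. -/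
noncomputable section

open scoped BigOperators

/-- Local spatial coordinates (fibre ℝⁿ). -/
abbrev Vec (n : ℕ) : Type := Fin n → ℝ

/-- Local coordinates `(t, xⁱ, yⁱ)` on the 1-jet bundle `J¹(ℝ, M)`. -/
abbrev J1 (n : ℕ) : Type := ℝ × Vec n × Vec n

namespace Jet

variable {n : ℕ}

/-- Partial derivative in the temporal variable `t`. -/
def pt (f : J1 n → ℝ) (p : J1 n) : ℝ := deriv (fun s => f (s, p.2)) p.1

/-- Partial derivative in the spatial variable `x^j`. -/
def px (f : J1 n → ℝ) (j : Fin n) (p : J1 n) : ℝ :=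
  deriv (fun s => f (p.1, Function.update p.2.1 j s, p.2.2)) (p.2.1 j)

/-- Partial derivative in the fibre variable `y^j`. -/
def py (f : J1 n → ℝ) (j : Fin n) (p : J1 n) : ℝ :=
  deriv (fun s => f (p.1, p.2.1, Function.update p.2.2 j s)) (p.2.2 j)

/-- Partial derivative of a function of the spatial variables only. -/
def pX (f : Vec n → ℝ) (j : Fin n) (x : Vec n) : ℝ :=
  deriv (fun s => f (Function.update x j s)) (x j)

/-- A change of coordinates `t̃ = t̃(t)`, `x̃ⁱ = x̃ⁱ(xʲ)` on the base `ℝ × M`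
(a gauge transformation of the bundle of configurations). -/
structure CoordChange (n : ℕ) where
  τ : ℝ → ℝ
  τinv : ℝ → ℝ
  σ : Vec n → Vec n
  σinv : Vec n → Vec n
  left_τ : Function.LeftInverse τinv τ
  right_τ : Function.RightInverse τinv τ
  left_σ : Function.LeftInverse σinv σ
  right_σ : Function.RightInverse σinv σ
  smooth_τ : ContDiff ℝ (⊤ : ℕ∞) τ
  smooth_τinv : ContDiff ℝ (⊤ : ℕ∞) τinv
  smooth_σ : ContDiff ℝ (⊤ : ℕ∞) σ
  smooth_σinv : ContDiff ℝ (⊤ : ℕ∞) σinv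

namespace CoordChange

variable (c : CoordChange n)

/-- `dt̃/dt`. -/
def dτ (t : ℝ) : ℝ := deriv c.τ t

/-- `dt/dt̃`, evaluated at `t̃ = τ t`. -/
def dτinv (t : ℝ) : ℝ := deriv c.τinv (c.τ t)

/-- The Jacobian `∂x̃^k/∂x^j`. -/
def Jac (k j : Fin n) (x : Vec n) : ℝ := pX (fun z => c.σ z k) j x

/-- The inverse Jacobian `∂x^i/∂x̃^j`, evaluated at `x̃ = σ x`. -/
def JacInv (i j : Fin n) (x : Vec n) : ℝ := pX (fun z => c.σinv z i) j (c.σ x)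

/-- The induced change of the fibre coordinates:
`ỹⁱ = (∂x̃ⁱ/∂xʲ)(dt/dt̃) yʲ`. -/
def yc (p : J1 n) : Vec n := fun i => (∑ j, c.Jac i j p.2.1 * p.2.2 j) * c.dτinv p.1

/-- The induced change of coordinates on `J¹(ℝ,M)`. -/
def Φ (p : J1 n) : J1 n := (c.τ p.1, c.σ p.2.1, c.yc p)

end CoordChange

/-- The transformation law of the local components of a temporal spray:
`2H̃⁽ᵏ⁾ = 2H⁽ʲ⁾ (dt/dt̃)² (∂x̃ᵏ/∂xʲ) − (dt/dt̃)(∂ỹᵏ/∂t)`. -/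
def TemporalSprayLaw (c : CoordChange n) (H H' : J1 n → Fin n → ℝ) : Prop :=
  ∀ (p : J1 n) (k : Fin n),
    2 * H' (c.Φ p) k =
      (∑ j, 2 * H p j * (c.dτinv p.1) ^ 2 * c.Jac k j p.2.1) -
        c.dτinv p.1 * pt (fun q => c.yc q k) p

/-- The transformation law of the local components of a spatial spray:
`2G̃⁽ᵏ⁾ = 2G⁽ʲ⁾ (dt/dt̃)² (∂x̃ᵏ/∂xʲ) − (∂xⁱ/∂x̃ʲ)(∂ỹᵏ/∂xⁱ) ỹʲ`. -/
def SpatialSprayLaw (c : CoordChange n) (G G' : J1 n → Fin n → ℝ) : Prop :=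
  ∀ (p : J1 n) (k : Fin n),
    2 * G' (c.Φ p) k =
      (∑ j, 2 * G p j * (c.dτinv p.1) ^ 2 * c.Jac k j p.2.1) -
        ∑ j, ∑ i, c.JacInv i j p.2.1 * px (fun q => c.yc q k) i p * c.yc p j

/-- The transformation law of a temporal nonlinear connection:
`M̃⁽ʲ⁾(dt̃/dt) = M⁽ᵏ⁾(dt/dt̃)(∂x̃ʲ/∂xᵏ) − ∂ỹʲ/∂t`. -/
def TemporalNLCLaw (c : CoordChange n) (M M' : J1 n → Fin n → ℝ) : Prop :=
  ∀ (p : J1 n) (j : Fin n),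
    M' (c.Φ p) j * c.dτ p.1 =
      (∑ k, M p k * c.dτinv p.1 * c.Jac j k p.2.1) - pt (fun q => c.yc q j) p

/-- The transformation law of a spatial nonlinear connection:
`Ñ⁽ʲ⁾₍ₖ₎(∂x̃ᵏ/∂xⁱ) = N⁽ᵏ⁾₍ᵢ₎(dt/dt̃)(∂x̃ʲ/∂xᵏ) − ∂ỹʲ/∂xⁱ`. -/
def SpatialNLCLaw (c : CoordChange n) (N N' : J1 n → Fin n → Fin n → ℝ) : Prop :=
  ∀ (p : J1 n) (j i : Fin n),
    (∑ k, N' (c.Φ p) j k * c.Jac k i p.2.1) =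
      (∑ k, N p k i * c.dτinv p.1 * c.Jac j k p.2.1) - px (fun q => c.yc q j) i p

/-- Transformation law of a (semi-Riemannian) temporal metric `h₁₁(t)`. -/
def TemporalMetricLaw (c : CoordChange n) (h h' : ℝ → ℝ) : Prop :=
  ∀ t : ℝ, h' (c.τ t) = h t * (c.dτinv t) ^ 2

/-- Transformation law of a (semi-Riemannian) spatial metric `φᵢⱼ(x)`. -/
def SpatialMetricLaw (c : CoordChange n) (φ φ' : Vec n → Matrix (Fin n) (Fin n) ℝ) : Prop :=
  ∀ (x : Vec n) (i j : Fin n),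
    φ' (c.σ x) i j = ∑ k, ∑ l, φ x k l * c.JacInv k i x * c.JacInv l j x

/-- The Christoffel symbol `H¹₁₁ = (h¹¹/2) dh₁₁/dt` of a temporal metric. -/
def christoffelT (h : ℝ → ℝ) (t : ℝ) : ℝ := deriv h t / (2 * h t)

/-- The Christoffel symbols `γⁱⱼₖ` of a spatial metric `φ`. -/
def christoffelS (φ : Vec n → Matrix (Fin n) (Fin n) ℝ) (i j k : Fin n) (x : Vec n) : ℝ :=
  (1 / 2) * ∑ m, (φ x)⁻¹ i m *
    (pX (fun z => φ z m j) k x + pX (fun z => φ z m k) j x - pX (fun z => φ z j k) m x)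

/-- The vertical distribution of `J¹(ℝ,M) → ℝ × M`, spanned by the `∂/∂yⁱ`. -/
def vertSub (n : ℕ) : Submodule ℝ (J1 n) :=
  (⊥ : Submodule ℝ ℝ).prod ((⊥ : Submodule ℝ (Vec n)).prod (⊤ : Submodule ℝ (Vec n)))

/-- The horizontal distribution determined by local functions `(M⁽ⁱ⁾₍₁₎₁, N⁽ⁱ⁾₍₁₎ⱼ)`:
it is spanned at each point by `∂/∂t − M⁽ʲ⁾∂/∂yʲ` and `∂/∂xⁱ − N⁽ʲ⁾₍ᵢ₎∂/∂yʲ`. -/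
def horizSub {n : ℕ} (M : J1 n → Fin n → ℝ) (N : J1 n → Fin n → Fin n → ℝ)
    (p : J1 n) : Submodule ℝ (J1 n) :=
  Submodule.span ℝ
    ({((1 : ℝ), (0 : Vec n), fun j => -(M p j))} ∪
      {w : J1 n | ∃ i : Fin n, w = ((0 : ℝ), (Pi.single i 1 : Vec n), fun j => -(N p j i))})

section Aux

open scoped ContDiff
open Finset

variable {n : ℕ}

lemma pt_eq_fderiv {f : J1 n → ℝ} {p : J1 n} (hf : DifferentiableAt ℝ f p) :
    pt f p = fderiv ℝ f p ((1 : ℝ), (0 : Vec n), (0 : Vec n)) := by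
  have hline : HasDerivAt (fun s : ℝ => ((s, p.2) : J1 n))
      ((1 : ℝ), (0 : Vec n), (0 : Vec n)) p.1 :=
    HasDerivAt.prodMk (hasDerivAt_id p.1) (hasDerivAt_const p.1 p.2)
  exact (hf.hasFDerivAt.comp_hasDerivAt p.1 hline).deriv

lemma px_eq_fderiv {f : J1 n → ℝ} {p : J1 n} (i : Fin n) (hf : DifferentiableAt ℝ f p) :
    px f i p = fderiv ℝ f p ((0 : ℝ), (Pi.single i 1 : Vec n), (0 : Vec n)) := by
  have hline : HasDerivAt (fun s : ℝ => ((p.1, Function.update p.2.1 i s, p.2.2) : J1 n))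
      ((0 : ℝ), (Pi.single i 1 : Vec n), (0 : Vec n)) (p.2.1 i) :=
    HasDerivAt.prodMk (hasDerivAt_const _ p.1)
      (HasDerivAt.prodMk (hasDerivAt_update p.2.1 i (p.2.1 i)) (hasDerivAt_const _ p.2.2))
  exact (hf.hasFDerivAt.comp_hasDerivAt_of_eq (p.2.1 i) hline
    (by rw [Function.update_eq_self])).deriv

lemma py_eq_fderiv {f : J1 n → ℝ} {p : J1 n} (j : Fin n) (hf : DifferentiableAt ℝ f p) :
    py f j p = fderiv ℝ f p ((0 : ℝ), (0 : Vec n), (Pi.single j 1 : Vec n)) := by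
  have hline : HasDerivAt (fun s : ℝ => ((p.1, p.2.1, Function.update p.2.2 j s) : J1 n))
      ((0 : ℝ), (0 : Vec n), (Pi.single j 1 : Vec n)) (p.2.2 j) :=
    HasDerivAt.prodMk (hasDerivAt_const _ p.1)
      (HasDerivAt.prodMk (hasDerivAt_const _ p.2.1) (hasDerivAt_update p.2.2 j (p.2.2 j)))
  exact (hf.hasFDerivAt.comp_hasDerivAt_of_eq (p.2.2 j) hline
    (by rw [Function.update_eq_self])).deriv

lemma vec_decomp (w : Vec n) : w = ∑ i, w i • (Pi.single i 1 : Vec n) := by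
  funext i'
  simp [Finset.sum_apply, Pi.single_apply]

lemma clm_pi_apply (L : Vec n →L[ℝ] Vec n) (w : Vec n) (k : Fin n) :
    L w k = ∑ i, w i * L (Pi.single i 1) k := by
  conv_lhs => rw [vec_decomp w]
  rw [map_sum]
  simp [Finset.sum_apply]

namespace CoordChange

variable (c : CoordChange n)

lemma jac_eq (x : Vec n) (k j : Fin n) :
    c.Jac k j x = fderiv ℝ c.σ x (Pi.single j 1) k := by
  have hσ : HasFDerivAt c.σ (fderiv ℝ c.σ x) x :=
    ((c.smooth_σ.differentiable (by simp)) x).hasFDerivAt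
  have hk := hasFDerivAt_pi'.1 hσ k
  exact (hk.comp_hasDerivAt_of_eq (x j) (hasDerivAt_update x j (x j))
    (by rw [Function.update_eq_self])).deriv

lemma jacInv_eq (x : Vec n) (i j : Fin n) :
    c.JacInv i j x = fderiv ℝ c.σinv (c.σ x) (Pi.single j 1) i := by
  have hσ : HasFDerivAt c.σinv (fderiv ℝ c.σinv (c.σ x)) (c.σ x) :=
    ((c.smooth_σinv.differentiable (by simp)) (c.σ x)).hasFDerivAt
  have hk := hasFDerivAt_pi'.1 hσ i
  exact (hk.comp_hasDerivAt_of_eq ((c.σ x) j) (hasDerivAt_update (c.σ x) j ((c.σ x) j))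
    (by rw [Function.update_eq_self])).deriv

lemma jacInv_mul_jac (x : Vec n) (i j : Fin n) :
    ∑ k, c.JacInv i k x * c.Jac k j x = if i = j then 1 else 0 := by
  have hσ : HasFDerivAt c.σ (fderiv ℝ c.σ x) x :=
    ((c.smooth_σ.differentiable (by simp)) x).hasFDerivAt
  have hinv : HasFDerivAt c.σinv (fderiv ℝ c.σinv (c.σ x)) (c.σ x) :=
    ((c.smooth_σinv.differentiable (by simp)) (c.σ x)).hasFDerivAt
  have hcomp : HasFDerivAt (fun z => c.σinv (c.σ z))
      ((fderiv ℝ c.σinv (c.σ x)).comp (fderiv ℝ c.σ x)) x := hinv.comp x hσ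
  have hid : (fun z : Vec n => c.σinv (c.σ z)) = id := funext c.left_σ
  rw [hid] at hcomp
  have huniq : (fderiv ℝ c.σinv (c.σ x)).comp (fderiv ℝ c.σ x) =
      ContinuousLinearMap.id ℝ (Vec n) := hcomp.unique (hasFDerivAt_id x)
  have h1 : fderiv ℝ c.σinv (c.σ x) (fderiv ℝ c.σ x (Pi.single j 1)) i
      = if i = j then (1 : ℝ) else 0 := by
    have h := congrArg (fun (L : Vec n →L[ℝ] Vec n) => L (Pi.single j 1) i) huniq
    simpa [Pi.single_apply] using h
  calc ∑ k, c.JacInv i k x * c.Jac k j x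
      = ∑ k, (fderiv ℝ c.σ x (Pi.single j 1)) k * fderiv ℝ c.σinv (c.σ x) (Pi.single k 1) i := by
        refine Finset.sum_congr rfl fun k _ => ?_
        rw [c.jacInv_eq, c.jac_eq]; ring
    _ = fderiv ℝ c.σinv (c.σ x) (fderiv ℝ c.σ x (Pi.single j 1)) i := (clm_pi_apply _ _ _).symm
    _ = if i = j then 1 else 0 := by rw [h1]

lemma jac_mul_jacInv (x : Vec n) (i j : Fin n) :
    ∑ k, c.Jac i k x * c.JacInv k j x = if i = j then 1 else 0 := by
  have h1 : (Matrix.of fun a b => c.JacInv a b x) * (Matrix.of fun a b => c.Jac a b x) = 1 := by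
    ext a b
    simp [Matrix.mul_apply, Matrix.one_apply, c.jacInv_mul_jac x a b]
  have h2 := mul_eq_one_comm.mp h1
  have h3 := congrFun (congrFun h2 i) j
  simpa [Matrix.mul_apply, Matrix.one_apply] using h3

lemma dτinv_mul_dτ (t : ℝ) : c.dτinv t * c.dτ t = 1 := by
  have hτ : HasDerivAt c.τ (c.dτ t) t := ((c.smooth_τ.differentiable (by simp)) t).hasDerivAt
  have hinv : HasDerivAt c.τinv (c.dτinv t) (c.τ t) :=
    ((c.smooth_τinv.differentiable (by simp)) (c.τ t)).hasDerivAt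
  have hcomp : HasDerivAt (fun s => c.τinv (c.τ s)) (c.dτinv t * c.dτ t) t := hinv.comp t hτ
  have hid : (fun s => c.τinv (c.τ s)) = id := funext c.left_τ
  rw [hid] at hcomp
  exact hcomp.unique (hasDerivAt_id t)

lemma contDiff_dτinv : ContDiff ℝ ∞ c.dτinv := by
  have h1 : ContDiff ℝ ∞ (deriv c.τinv) :=
    (contDiff_infty_iff_deriv.mp (c.smooth_τinv.of_le (by simp))).2
  exact h1.comp (c.smooth_τ.of_le (by simp))

lemma contDiff_jac (k j : Fin n) : ContDiff ℝ ∞ fun x => c.Jac k j x := by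
  have h1 : ContDiff ℝ ∞ (fderiv ℝ c.σ) :=
    (contDiff_infty_iff_fderiv.mp (c.smooth_σ.of_le (by simp))).2
  have h2 : ContDiff ℝ ∞ fun x => fderiv ℝ c.σ x (Pi.single j 1) :=
    h1.clm_apply contDiff_const
  have h3 := (contDiff_pi.mp h2) k
  have h4 : (fun x => c.Jac k j x) = fun x => fderiv ℝ c.σ x (Pi.single j 1) k :=
    funext fun x => c.jac_eq x k j
  rw [h4]
  exact h3

lemma contDiff_yc : ContDiff ℝ ∞ c.yc := by
  refine contDiff_pi.mpr fun k => ?_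
  show ContDiff ℝ ∞ fun p : J1 n => (∑ j, c.Jac k j p.2.1 * p.2.2 j) * c.dτinv p.1
  refine ContDiff.mul ?_ (c.contDiff_dτinv.comp contDiff_fst)
  refine ContDiff.sum fun j _ => ?_
  exact ((c.contDiff_jac k j).comp (contDiff_fst.comp contDiff_snd)).mul
    ((contDiff_pi.mp (contDiff_snd.comp contDiff_snd)) j)

lemma differentiable_yc : Differentiable ℝ c.yc :=
  c.contDiff_yc.differentiable (by simp)

lemma differentiableAt_yck (p : J1 n) (k : Fin n) :
    DifferentiableAt ℝ (fun q => c.yc q k) p :=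
  (hasFDerivAt_pi'.1 (c.differentiable_yc p).hasFDerivAt k).differentiableAt

lemma py_yc (p : J1 n) (k j : Fin n) :
    py (fun q => c.yc q k) j p = c.Jac k j p.2.1 * c.dτinv p.1 := by
  have hsum : HasDerivAt (fun s => ∑ j', c.Jac k j' p.2.1 * Function.update p.2.2 j s j')
      (∑ j', if j' = j then c.Jac k j' p.2.1 else 0) (p.2.2 j) := by
    refine HasDerivAt.fun_sum fun j' _ => ?_
    by_cases h : j' = j
    · subst h
      have : (fun s : ℝ => c.Jac k j' p.2.1 * Function.update p.2.2 j' s j') =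
          fun s : ℝ => c.Jac k j' p.2.1 * s := by
        funext s; rw [Function.update_self]
      rw [this, if_pos rfl]
      simpa using (hasDerivAt_id (p.2.2 j')).const_mul (c.Jac k j' p.2.1)
    · have : (fun s : ℝ => c.Jac k j' p.2.1 * Function.update p.2.2 j s j') =
          fun _ : ℝ => c.Jac k j' p.2.1 * p.2.2 j' := by
        funext s; rw [Function.update_of_ne h]
      rw [this, if_neg h]
      exact hasDerivAt_const _ _
  have hval : (∑ j', if j' = j then c.Jac k j' p.2.1 else 0) = c.Jac k j p.2.1 := by
    simp
  rw [hval] at hsum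
  exact ((hsum.mul_const (c.dτinv p.1)).deriv)

end CoordChange

lemma j1_decomp (v : J1 n) :
    v = v.1 • ((1 : ℝ), (0 : Vec n), (0 : Vec n))
      + ((∑ i, v.2.1 i • ((0 : ℝ), (Pi.single i 1 : Vec n), (0 : Vec n)))
      + ∑ j, v.2.2 j • ((0 : ℝ), (0 : Vec n), (Pi.single j 1 : Vec n))) := by
  refine Prod.ext ?_ (Prod.ext ?_ ?_)
  · simp [Prod.fst_sum]
  · funext i'
    simp [Prod.fst_sum, Prod.snd_sum, Finset.sum_apply, Pi.single_apply]
  · funext j'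
    simp [Prod.fst_sum, Prod.snd_sum, Finset.sum_apply, Pi.single_apply]

namespace CoordChange

variable (c : CoordChange n)

lemma fderiv_yck_apply (p : J1 n) (k : Fin n) (v : J1 n) :
    fderiv ℝ (fun q => c.yc q k) p v =
      v.1 * pt (fun q => c.yc q k) p + (∑ i, v.2.1 i * px (fun q => c.yc q k) i p)
      + ∑ j, v.2.2 j * (c.Jac k j p.2.1 * c.dτinv p.1) := by
  have hk := c.differentiableAt_yck p k
  set L := fderiv ℝ (fun q => c.yc q k) p with hL
  have h1 : L ((1 : ℝ), (0 : Vec n), (0 : Vec n)) = pt (fun q => c.yc q k) p :=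
    (pt_eq_fderiv hk).symm
  have h2 : ∀ i, L ((0 : ℝ), (Pi.single i 1 : Vec n), (0 : Vec n)) =
      px (fun q => c.yc q k) i p := fun i => (px_eq_fderiv i hk).symm
  have h3 : ∀ j, L ((0 : ℝ), (0 : Vec n), (Pi.single j 1 : Vec n)) =
      c.Jac k j p.2.1 * c.dτinv p.1 := fun j => (py_eq_fderiv j hk).symm.trans (c.py_yc p k j)
  have e2 : ∑ i, v.2.1 i * L ((0 : ℝ), (Pi.single i 1 : Vec n), (0 : Vec n))
      = ∑ i, v.2.1 i * px (fun q => c.yc q k) i p :=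
    Finset.sum_congr rfl fun i _ => by rw [h2 i]
  have e3 : ∑ j, v.2.2 j * L ((0 : ℝ), (0 : Vec n), (Pi.single j 1 : Vec n))
      = ∑ j, v.2.2 j * (c.Jac k j p.2.1 * c.dτinv p.1) :=
    Finset.sum_congr rfl fun j _ => by rw [h3 j]
  conv_lhs => rw [j1_decomp v]
  rw [map_add, map_add, map_smul, map_sum, map_sum]
  simp only [map_smul, smul_eq_mul]
  rw [h1, e2, e3]
  ring

lemma fderiv_Φ_apply (p v : J1 n) :
    fderiv ℝ c.Φ p v =
      (c.dτ p.1 * v.1,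
       fun k => ∑ i, v.2.1 i * c.Jac k i p.2.1,
       fun k => v.1 * pt (fun q => c.yc q k) p + (∑ i, v.2.1 i * px (fun q => c.yc q k) i p)
         + ∑ j, v.2.2 j * (c.Jac k j p.2.1 * c.dτinv p.1)) := by
  have h1 : HasFDerivAt (fun q : J1 n => c.τ q.1)
      ((c.dτ p.1) • ContinuousLinearMap.fst ℝ ℝ (Vec n × Vec n)) p :=
    HasDerivAt.comp_hasFDerivAt p (((c.smooth_τ.differentiable (by simp)) p.1).hasDerivAt)
      hasFDerivAt_fst
  have h2 : HasFDerivAt (fun q : J1 n => c.σ q.2.1)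
      ((fderiv ℝ c.σ p.2.1).comp ((ContinuousLinearMap.fst ℝ (Vec n) (Vec n)).comp
        (ContinuousLinearMap.snd ℝ ℝ (Vec n × Vec n)))) p :=
    (((c.smooth_σ.differentiable (by simp)) p.2.1).hasFDerivAt).comp p
      (hasFDerivAt_fst.comp p hasFDerivAt_snd)
  have h3 : HasFDerivAt c.yc (fderiv ℝ c.yc p) p := (c.differentiable_yc p).hasFDerivAt
  have hΦ : HasFDerivAt c.Φ
      ((c.dτ p.1 • ContinuousLinearMap.fst ℝ ℝ (Vec n × Vec n)).prod
        (((fderiv ℝ c.σ p.2.1).comp ((ContinuousLinearMap.fst ℝ (Vec n) (Vec n)).comp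
          (ContinuousLinearMap.snd ℝ ℝ (Vec n × Vec n)))).prod (fderiv ℝ c.yc p))) p :=
    HasFDerivAt.prodMk h1 (HasFDerivAt.prodMk h2 h3)
  rw [hΦ.fderiv]
  refine Prod.ext ?_ (Prod.ext ?_ ?_)
  · simp [mul_comm]
  · funext k
    show (fderiv ℝ c.σ p.2.1) v.2.1 k = _
    rw [clm_pi_apply]
    exact Finset.sum_congr rfl fun i _ => by rw [← c.jac_eq]
  · funext k
    show fderiv ℝ c.yc p v k = _
    have hcc : fderiv ℝ c.yc p v k = fderiv ℝ (fun q => c.yc q k) p v := by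
      rw [(hasFDerivAt_pi'.1 h3 k).fderiv]; rfl
    rw [hcc, c.fderiv_yck_apply]

end CoordChange

/-- The horizontal distribution described as a "graph" submodule. -/
def horizAux (M : J1 n → Fin n → ℝ) (N : J1 n → Fin n → Fin n → ℝ) (p : J1 n) :
    Submodule ℝ (J1 n) where
  carrier := {v | ∀ j, v.2.2 j = -(v.1 * M p j + ∑ i, v.2.1 i * N p j i)}
  add_mem' := by
    intro a b ha hb j
    simp only [Prod.fst_add, Prod.snd_add, Pi.add_apply]
    rw [ha j, hb j]
    have h : ∑ i, (a.2.1 i + b.2.1 i) * N p j i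
        = (∑ i, a.2.1 i * N p j i) + ∑ i, b.2.1 i * N p j i := by
      rw [← Finset.sum_add_distrib]
      exact Finset.sum_congr rfl fun i _ => by ring
    rw [h]
    ring
  zero_mem' := by
    intro j
    simp
  smul_mem' := by
    intro r a ha j
    simp only [Prod.smul_fst, Prod.smul_snd, Pi.smul_apply, smul_eq_mul]
    rw [ha j]
    have h : ∑ i, r * a.2.1 i * N p j i = r * ∑ i, a.2.1 i * N p j i := by
      rw [Finset.mul_sum]
      exact Finset.sum_congr rfl fun i _ => by ring
    rw [h]
    ring

lemma mem_horizAux {M : J1 n → Fin n → ℝ} {N : J1 n → Fin n → Fin n → ℝ} {p v : J1 n} :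
    v ∈ horizAux M N p ↔ ∀ j, v.2.2 j = -(v.1 * M p j + ∑ i, v.2.1 i * N p j i) :=
  Iff.rfl

lemma horizSub_eq (M : J1 n → Fin n → ℝ) (N : J1 n → Fin n → Fin n → ℝ) (p : J1 n) :
    horizSub M N p = horizAux M N p := by
  apply le_antisymm
  · rw [horizSub]
    refine Submodule.span_le.2 ?_
    rintro v (rfl | ⟨i, rfl⟩)
    · intro j
      simp
    · intro j
      simp [Pi.single_apply, ite_mul]
  · intro v hv
    have hv' : ∀ j, v.2.2 j = -(v.1 * M p j + ∑ i, v.2.1 i * N p j i) := hv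
    have hdec : v = v.1 • ((1 : ℝ), (0 : Vec n), fun j => -(M p j))
        + ∑ i, v.2.1 i • ((0 : ℝ), (Pi.single i 1 : Vec n), fun j => -(N p j i)) := by
      refine Prod.ext ?_ (Prod.ext ?_ ?_)
      · simp [Prod.fst_sum]
      · funext i'
        simp [Prod.fst_sum, Prod.snd_sum, Finset.sum_apply, Pi.single_apply]
      · funext j
        rw [hv' j]
        simp only [Prod.fst_add, Prod.snd_add, Prod.smul_fst, Prod.smul_snd, Pi.add_apply,
          Pi.smul_apply, smul_eq_mul, Prod.snd_sum, Finset.sum_apply, mul_neg]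
        rw [Finset.sum_neg_distrib]
        ring
    rw [hdec]
    exact add_mem (Submodule.smul_mem _ _ (Submodule.subset_span (Or.inl rfl)))
      (Submodule.sum_mem _ fun i _ =>
        Submodule.smul_mem _ _ (Submodule.subset_span (Or.inr ⟨i, rfl⟩)))

end Aux

/-- A nonlinear connection on `J¹(ℝ,M)` — a distribution complementary to
the vertical distribution of the projection onto `ℝ × M` — is determined by a pair of families
of local functions `M⁽ⁱ⁾₍₁₎₁`, `N⁽ⁱ⁾₍₁₎ⱼ`: the associated horizontal distribution is always
complementary to the vertical one, and it is invariantly (globally) defined, i.e. mapped by the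
differential of the induced jet coordinate change onto the distribution of the other chart,
precisely when `M` and `N` obey the transformation laws
`M̃⁽ʲ⁾₍₁₎₁(dt̃/dt) = M⁽ᵏ⁾₍₁₎₁(dt/dt̃)(∂x̃ʲ/∂xᵏ) − ∂ỹʲ/∂t` and
`Ñ⁽ʲ⁾₍₁₎ₖ(∂x̃ᵏ/∂xⁱ) = N⁽ᵏ⁾₍₁₎ᵢ(dt/dt̃)(∂x̃ʲ/∂xᵏ) − ∂ỹʲ/∂xⁱ`. -/
theorem nonlinear_connection_iff_transformation_laws
    {n : ℕ} (c : CoordChange n)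
    (M M' : J1 n → Fin n → ℝ) (N N' : J1 n → Fin n → Fin n → ℝ)
    (hM : ContDiff ℝ (⊤ : ℕ∞) M) (hM' : ContDiff ℝ (⊤ : ℕ∞) M')
    (hN : ∀ i, ContDiff ℝ (⊤ : ℕ∞) (fun p => N p i)) (hN' : ∀ i, ContDiff ℝ (⊤ : ℕ∞) (fun p => N' p i)) :
    (∀ p : J1 n, IsCompl (horizSub M N p) (vertSub n)) ∧
    ((∀ p : J1 n,
        (horizSub M N p).map (fderiv ℝ c.Φ p : J1 n →ₗ[ℝ] J1 n) =
          horizSub M' N' (c.Φ p)) ↔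
      (TemporalNLCLaw c M M' ∧ SpatialNLCLaw c N N')) := by
  constructor
  · -- the horizontal distribution is always complementary to the vertical one
    intro p
    rw [horizSub_eq]
    constructor
    · rw [Submodule.disjoint_def]
      intro v hv hv'
      rw [vertSub, Submodule.mem_prod, Submodule.mem_prod] at hv'
      obtain ⟨h1, h2, -⟩ := hv'
      rw [Submodule.mem_bot] at h1 h2
      refine Prod.ext h1 (Prod.ext h2 ?_)
      funext j
      have h3 := (mem_horizAux.mp hv) j
      rw [h1, h2] at h3
      simpa using h3
    · rw [codisjoint_iff, eq_top_iff]
      intro w _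
      refine Submodule.mem_sup.mpr
        ⟨(w.1, w.2.1, fun j => -(w.1 * M p j + ∑ i, w.2.1 i * N p j i)),
          mem_horizAux.mpr fun j => rfl,
         ((0 : ℝ), (0 : Vec n), fun j => w.2.2 j + (w.1 * M p j + ∑ i, w.2.1 i * N p j i)),
          ?_, ?_⟩
      · rw [vertSub]
        exact Submodule.mem_prod.mpr ⟨by simp, Submodule.mem_prod.mpr ⟨by simp, trivial⟩⟩
      · refine Prod.ext (by simp) (Prod.ext (by simp) ?_)
        funext j
        show -(w.1 * M p j + ∑ i, w.2.1 i * N p j i)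
          + (w.2.2 j + (w.1 * M p j + ∑ i, w.2.1 i * N p j i)) = w.2.2 j
        ring
  · constructor
    · -- invariance implies the transformation laws
      intro hmap
      constructor
      · intro p j
        have hg : ((1 : ℝ), (0 : Vec n), fun j' => -(M p j')) ∈ horizSub M N p :=
          Submodule.subset_span (Or.inl rfl)
        have himg := Submodule.mem_map_of_mem
          (f := (fderiv ℝ c.Φ p : J1 n →ₗ[ℝ] J1 n)) hg
        rw [hmap p, horizSub_eq] at himg
        have h := (mem_horizAux.mp himg) j
        simp only [ContinuousLinearMap.coe_coe] at h
        rw [c.fderiv_Φ_apply] at h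
        simp only [Pi.zero_apply, zero_mul, mul_zero, Finset.sum_const_zero, one_mul, mul_one,
          add_zero, zero_add] at h
        have e1 : ∑ j', -(M p j') * (c.Jac j j' p.2.1 * c.dτinv p.1)
            = -∑ k, M p k * c.dτinv p.1 * c.Jac j k p.2.1 := by
          rw [← Finset.sum_neg_distrib]
          exact Finset.sum_congr rfl fun k _ => by ring
        rw [e1] at h
        linear_combination h
      · intro p j i
        have hg : ((0 : ℝ), (Pi.single i 1 : Vec n), fun j' => -(N p j' i)) ∈ horizSub M N p :=
          Submodule.subset_span (Or.inr ⟨i, rfl⟩)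
        have himg := Submodule.mem_map_of_mem
          (f := (fderiv ℝ c.Φ p : J1 n →ₗ[ℝ] J1 n)) hg
        rw [hmap p, horizSub_eq] at himg
        have h := (mem_horizAux.mp himg) j
        simp only [ContinuousLinearMap.coe_coe] at h
        rw [c.fderiv_Φ_apply] at h
        simp only [Pi.single_apply, ite_mul, one_mul, zero_mul, Finset.sum_ite_eq',
          Finset.mem_univ, if_true, Pi.zero_apply, mul_zero, zero_add, add_zero,
          Finset.sum_const_zero] at h
        have e1 : ∑ k, -(N p k i) * (c.Jac j k p.2.1 * c.dτinv p.1)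
            = -∑ k, N p k i * c.dτinv p.1 * c.Jac j k p.2.1 := by
          rw [← Finset.sum_neg_distrib]
          exact Finset.sum_congr rfl fun k _ => by ring
        rw [e1] at h
        have e2 : ∑ k, N' (c.Φ p) j k * c.Jac k i p.2.1
            = ∑ k, c.Jac k i p.2.1 * N' (c.Φ p) j k :=
          Finset.sum_congr rfl fun k _ => by ring
        rw [e2]
        linear_combination h
    · -- the transformation laws imply invariance
      rintro ⟨hT, hSp⟩ p
      apply le_antisymm
      · rw [horizSub_eq M' N']
        rw [horizSub, Submodule.map_span]
        refine Submodule.span_le.2 ?_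
        rintro w ⟨g, hg, rfl⟩
        rcases hg with rfl | ⟨i, rfl⟩
        · refine mem_horizAux.mpr fun j => ?_
          simp only [ContinuousLinearMap.coe_coe]
          rw [c.fderiv_Φ_apply]
          simp only [Pi.zero_apply, zero_mul, mul_zero, Finset.sum_const_zero, one_mul, mul_one,
            add_zero, zero_add]
          have h := hT p j
          have e1 : ∑ j', -(M p j') * (c.Jac j j' p.2.1 * c.dτinv p.1)
              = -∑ k, M p k * c.dτinv p.1 * c.Jac j k p.2.1 := by
            rw [← Finset.sum_neg_distrib]
            exact Finset.sum_congr rfl fun k _ => by ring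
          rw [e1]
          linear_combination h
        · refine mem_horizAux.mpr fun j => ?_
          simp only [ContinuousLinearMap.coe_coe]
          rw [c.fderiv_Φ_apply]
          simp only [Pi.single_apply, ite_mul, one_mul, zero_mul, Finset.sum_ite_eq',
            Finset.mem_univ, if_true, Pi.zero_apply, mul_zero, zero_add, add_zero,
            Finset.sum_const_zero]
          have h := hSp p j i
          have e1 : ∑ k, -(N p k i) * (c.Jac j k p.2.1 * c.dτinv p.1)
              = -∑ k, N p k i * c.dτinv p.1 * c.Jac j k p.2.1 := by
            rw [← Finset.sum_neg_distrib]
            exact Finset.sum_congr rfl fun k _ => by ring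
          rw [e1]
          have e2 : ∑ k, c.Jac k i p.2.1 * N' (c.Φ p) j k
              = ∑ k, N' (c.Φ p) j k * c.Jac k i p.2.1 :=
            Finset.sum_congr rfl fun k _ => by ring
          rw [e2]
          linear_combination h
      · conv_lhs => rw [horizSub]
        refine Submodule.span_le.2 ?_
        rintro w (rfl | ⟨k, rfl⟩)
        · -- temporal generator of the target chart
          have hmem : (fderiv ℝ c.Φ p : J1 n →ₗ[ℝ] J1 n) ((1 : ℝ), (0 : Vec n), fun j => -(M p j))
              ∈ (horizSub M N p).map (fderiv ℝ c.Φ p : J1 n →ₗ[ℝ] J1 n) :=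
            Submodule.mem_map_of_mem (Submodule.subset_span (Or.inl rfl))
          have heq : ((1 : ℝ), (0 : Vec n), fun j => -(M' (c.Φ p) j))
              = c.dτinv p.1 • ((fderiv ℝ c.Φ p : J1 n →ₗ[ℝ] J1 n)
                  ((1 : ℝ), (0 : Vec n), fun j => -(M p j))) := by
            simp only [ContinuousLinearMap.coe_coe]
            rw [c.fderiv_Φ_apply]
            have hd := c.dτinv_mul_dτ p.1
            refine Prod.ext ?_ (Prod.ext ?_ ?_)
            · show (1 : ℝ) = c.dτinv p.1 * (c.dτ p.1 * 1)
              rw [mul_one]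
              exact hd.symm
            · funext m
              simp
            · funext k
              simp only [Prod.smul_fst, Prod.smul_snd, Pi.smul_apply, smul_eq_mul,
                Pi.zero_apply, zero_mul, Finset.sum_const_zero, one_mul, mul_one, add_zero,
                zero_add]
              have h := hT p k
              have e1 : ∑ j', -(M p j') * (c.Jac k j' p.2.1 * c.dτinv p.1)
                  = -∑ j', M p j' * c.dτinv p.1 * c.Jac k j' p.2.1 := by
                rw [← Finset.sum_neg_distrib]
                exact Finset.sum_congr rfl fun j' _ => by ring
              rw [e1]
              linear_combination (-(c.dτinv p.1)) * h + (M' (c.Φ p) k) * hd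
          rw [heq]
          exact Submodule.smul_mem _ _ hmem
        · -- spatial generator of the target chart
          have hAi : ∀ i, fderiv ℝ c.Φ p ((0 : ℝ), (Pi.single i 1 : Vec n), fun j => -(N p j i))
              = ((0 : ℝ), (fun m => c.Jac m i p.2.1),
                  fun j => -(∑ k', N' (c.Φ p) j k' * c.Jac k' i p.2.1)) := by
            intro i
            rw [c.fderiv_Φ_apply]
            refine Prod.ext (by simp) (Prod.ext ?_ ?_)
            · funext m
              simp [Pi.single_apply, ite_mul]
            · funext j
              simp only [Pi.single_apply, ite_mul, one_mul, zero_mul, Finset.sum_ite_eq',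
                Finset.mem_univ, if_true, mul_zero, zero_add, add_zero, Finset.sum_const_zero]
              have h := hSp p j i
              have e1 : ∑ k', -(N p k' i) * (c.Jac j k' p.2.1 * c.dτinv p.1)
                  = -∑ k', N p k' i * c.dτinv p.1 * c.Jac j k' p.2.1 := by
                rw [← Finset.sum_neg_distrib]
                exact Finset.sum_congr rfl fun k' _ => by ring
              rw [e1]
              linear_combination h
          have heq : ((0 : ℝ), (Pi.single k 1 : Vec n), fun j => -(N' (c.Φ p) j k))
              = ∑ i, c.JacInv i k p.2.1 • ((fderiv ℝ c.Φ p : J1 n →ₗ[ℝ] J1 n)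
                  ((0 : ℝ), (Pi.single i 1 : Vec n), fun j => -(N p j i))) := by
            simp only [ContinuousLinearMap.coe_coe, hAi]
            refine Prod.ext ?_ (Prod.ext ?_ ?_)
            · rw [Prod.fst_sum]
              simp
            · funext m
              simp only [Prod.snd_sum, Prod.fst_sum, Finset.sum_apply, Prod.smul_snd,
                Prod.smul_fst, Pi.smul_apply, smul_eq_mul]
              have e : ∑ i, c.JacInv i k p.2.1 * c.Jac m i p.2.1
                  = ∑ i, c.Jac m i p.2.1 * c.JacInv i k p.2.1 :=
                Finset.sum_congr rfl fun i _ => by ring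
              rw [e, c.jac_mul_jacInv]
              simp [Pi.single_apply]
            · funext j
              simp only [Prod.snd_sum, Finset.sum_apply, Prod.smul_snd, Pi.smul_apply,
                smul_eq_mul]
              have s1 : ∀ i : Fin n, c.JacInv i k p.2.1
                    * -(∑ k', N' (c.Φ p) j k' * c.Jac k' i p.2.1)
                  = ∑ k', -(N' (c.Φ p) j k' * (c.Jac k' i p.2.1 * c.JacInv i k p.2.1)) := by
                intro i
                rw [mul_neg, Finset.mul_sum, ← Finset.sum_neg_distrib]
                exact Finset.sum_congr rfl fun k' _ => by ring
              calc -(N' (c.Φ p) j k)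
                  = ∑ k', -(N' (c.Φ p) j k' * (if k' = k then 1 else 0)) := by
                    simp [mul_ite]
                _ = ∑ k', -(N' (c.Φ p) j k' * ∑ i, c.Jac k' i p.2.1 * c.JacInv i k p.2.1) :=
                    Finset.sum_congr rfl fun k' _ => by rw [c.jac_mul_jacInv]
                _ = ∑ k', ∑ i, -(N' (c.Φ p) j k' * (c.Jac k' i p.2.1 * c.JacInv i k p.2.1)) :=
                    Finset.sum_congr rfl fun k' _ => by
                      rw [Finset.mul_sum, ← Finset.sum_neg_distrib]
                _ = ∑ i, ∑ k', -(N' (c.Φ p) j k' * (c.Jac k' i p.2.1 * c.JacInv i k p.2.1)) :=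
                    Finset.sum_comm
                _ = ∑ i, c.JacInv i k p.2.1 * -(∑ k', N' (c.Φ p) j k' * c.Jac k' i p.2.1) :=
                    Finset.sum_congr rfl fun i _ => (s1 i).symm
          rw [heq]
          exact Submodule.sum_mem _ fun i _ =>
            Submodule.smul_mem _ _ (Submodule.mem_map_of_mem
              (Submodule.subset_span (Or.inr ⟨i, rfl⟩)))

end Jet
end
end

section
/- Let H^1_{11} be the Christoffel symbol of a semi-Riemannian metric h_{11}(t) on R and γ^i_{jk} the Christoffel symbols of a semi-Riemannian metric φ_{ij}(x) on M. Then the local components M^{(i)}_{(1)1} = −H^1_{11} y^i and N^{(i)}_{(1)j} = γ^i_{jk} y^k satisfy, respectively, the temporal and spatial nonlinear connection transformation laws; hence Γ₀ = (M^{(i)}_{(1)1}, N^{(i)}_{(1)j}) is a nonlinear connection on J^1(R,M) (the canonical nonlinear connection attached to the pair (h,φ)). -/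
noncomputable section

open scoped BigOperators

namespace Jet

variable {n : ℕ}

/-! ### Auxiliary calculus lemmas -/

section Aux

lemma hasDerivAt_update (x : Vec n) (j : Fin n) (s0 : ℝ) :
    HasDerivAt (fun s => Function.update x j s) (Pi.single j 1) s0 := by
  rw [hasDerivAt_pi]
  intro i
  rcases eq_or_ne i j with rfl | h
  · simpa [Function.update_apply] using (hasDerivAt_id' s0)
  · simpa [Function.update_apply, h, Pi.single_apply] using (hasDerivAt_const s0 (x i))

lemma pX_hasDerivAt {f : Vec n → ℝ} {x : Vec n} (hf : DifferentiableAt ℝ f x) (j : Fin n) :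
    HasDerivAt (fun s => f (Function.update x j s)) (fderiv ℝ f x (Pi.single j 1)) (x j) := by
  have hL : HasFDerivAt f (fderiv ℝ f x) (Function.update x j (x j)) := by
    rw [Function.update_eq_self]; exact hf.hasFDerivAt
  exact hL.comp_hasDerivAt (x j) (hasDerivAt_update x j (x j))

lemma pX_eq {f : Vec n → ℝ} {x : Vec n} (hf : DifferentiableAt ℝ f x) (j : Fin n) :
    pX f j x = fderiv ℝ f x (Pi.single j 1) := (pX_hasDerivAt hf j).deriv

lemma fderiv_eq_sum {f : Vec n → ℝ} {x : Vec n} (v : Vec n) :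
    fderiv ℝ f x v = ∑ k, v k * fderiv ℝ f x (Pi.single k 1) := by
  conv_lhs => rw [← Finset.univ_sum_single v]
  rw [map_sum]
  refine Finset.sum_congr rfl fun k _ => ?_
  have : (Pi.single k (v k) : Vec n) = v k • (Pi.single k 1 : Vec n) := by
    ext i
    rcases eq_or_ne i k with rfl | hik
    · simp
    · simp [Pi.single_apply, hik]
  rw [this, map_smul, smul_eq_mul]

lemma pX_comp_hasDerivAt (g : Vec n → ℝ) (F : Vec n → Vec n) (x : Vec n)
    (hg : DifferentiableAt ℝ g (F x))
    (hF : ∀ k, DifferentiableAt ℝ (fun z => F z k) x) (i : Fin n) :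
    HasDerivAt (fun s => g (F (Function.update x i s)))
      (∑ k, pX g k (F x) * pX (fun z => F z k) i x) (x i) := by
  have hpath : HasDerivAt (fun s => F (Function.update x i s))
      (fun k => fderiv ℝ (fun z => F z k) x (Pi.single i 1)) (x i) := by
    rw [hasDerivAt_pi]
    intro k
    exact pX_hasDerivAt (hF k) i
  have hL : HasFDerivAt g (fderiv ℝ g (F x)) (F (Function.update x i (x i))) := by
    rw [Function.update_eq_self]; exact hg.hasFDerivAt
  have h := hL.comp_hasDerivAt (x i) hpath
  have hval : fderiv ℝ g (F x) (fun k => fderiv ℝ (fun z => F z k) x (Pi.single i 1))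
      = ∑ k, pX g k (F x) * pX (fun z => F z k) i x := by
    rw [fderiv_eq_sum]
    refine Finset.sum_congr rfl fun k _ => ?_
    rw [pX_eq hg, pX_eq (hF k)]; ring
  rw [← hval]
  exact h

lemma pX_comp (g : Vec n → ℝ) (F : Vec n → Vec n) (x : Vec n)
    (hg : DifferentiableAt ℝ g (F x))
    (hF : ∀ k, DifferentiableAt ℝ (fun z => F z k) x) (i : Fin n) :
    pX (fun z => g (F z)) i x = ∑ k, pX g k (F x) * pX (fun z => F z k) i x :=
  (pX_comp_hasDerivAt g F x hg hF i).deriv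

lemma pX_coord (x : Vec n) (j i : Fin n) :
    pX (fun z => z j) i x = if j = i then 1 else 0 := by
  have hd : DifferentiableAt ℝ (fun z : Vec n => z j) x :=
    (ContinuousLinearMap.proj j : Vec n →L[ℝ] ℝ).differentiableAt
  rw [pX_eq hd i]
  have : (fun z : Vec n => z j) = (ContinuousLinearMap.proj j : Vec n →L[ℝ] ℝ) := rfl
  rw [this, ContinuousLinearMap.fderiv]
  simp [Pi.single_apply]

lemma contDiff_fderiv_apply (f : Vec n → ℝ) (hf : ContDiff ℝ (⊤ : ℕ∞) f) (v : Vec n) :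
    ContDiff ℝ (⊤ : ℕ∞) (fun x => fderiv ℝ f x v) :=
  (hf.fderiv_right (by simp)).clm_apply contDiff_const

lemma pX_eq_fderiv_fun (f : Vec n → ℝ) (hf : ContDiff ℝ (⊤ : ℕ∞) f) (j : Fin n) :
    (fun x => pX f j x) = fun x => fderiv ℝ f x (Pi.single j 1) := by
  funext x; exact pX_eq ((hf.differentiable (by simp)) x) j

lemma contDiff_pX (f : Vec n → ℝ) (hf : ContDiff ℝ (⊤ : ℕ∞) f) (j : Fin n) :
    ContDiff ℝ (⊤ : ℕ∞) (fun x => pX f j x) := by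
  rw [pX_eq_fderiv_fun f hf j]; exact contDiff_fderiv_apply f hf _

lemma pX_pX_symm (f : Vec n → ℝ) (hf : ContDiff ℝ (⊤ : ℕ∞) f) (x : Vec n) (a c : Fin n) :
    pX (fun z => pX f a z) c x = pX (fun z => pX f c z) a x := by
  have hdiff : Differentiable ℝ f := hf.differentiable (by simp)
  have hf' : ContDiff ℝ (⊤ : ℕ∞) (fderiv ℝ f) := hf.fderiv_right (by simp)
  have hdiff' : DifferentiableAt ℝ (fderiv ℝ f) x := (hf'.differentiable (by simp)) x
  have key2 : ∀ (v : Vec n) (w : Fin n), pX (fun z => fderiv ℝ f z v) w x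
      = fderiv ℝ (fderiv ℝ f) x (Pi.single w 1) v := by
    intro v w
    rw [pX_eq (((hf'.clm_apply contDiff_const).differentiable (by simp)) x) w]
    rw [fderiv_clm_apply hdiff' (differentiableAt_const v)]
    simp
  rw [pX_eq_fderiv_fun f hf a, pX_eq_fderiv_fun f hf c, key2, key2]
  exact second_derivative_symmetric (fun y => (hdiff y).hasFDerivAt) hdiff'.hasFDerivAt _ _

end Aux

/-! ### Temporal lemmas -/

section Temporal

variable (c : CoordChange n)

lemma hasDerivAt_τ (t : ℝ) : HasDerivAt c.τ (c.dτ t) t :=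
  ((c.smooth_τ.differentiable (by simp)) t).hasDerivAt

lemma dτ_mul_dτinv (t : ℝ) : c.dτ t * c.dτinv t = 1 := by
  have hcomp : HasDerivAt (fun s => c.τinv (c.τ s)) (c.dτinv t * c.dτ t) t := by
    have h1 : HasDerivAt c.τinv (c.dτinv t) (c.τ t) :=
      ((c.smooth_τinv.differentiable (by simp)) (c.τ t)).hasDerivAt
    exact h1.comp t (hasDerivAt_τ c t)
  have hid : (fun s => c.τinv (c.τ s)) = fun s => s := funext c.left_τ
  rw [hid] at hcomp
  have := hcomp.unique (hasDerivAt_id t)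
  linarith [this]

lemma dτinv_ne_zero (t : ℝ) : c.dτinv t ≠ 0 := by
  intro h0
  have := dτ_mul_dτinv c t
  rw [h0, mul_zero] at this
  exact absurd this (by norm_num)

lemma differentiable_dτinv : Differentiable ℝ (fun s => c.dτinv s) := by
  have h1 : ContDiff ℝ ((⊤:ℕ∞) : WithTop ℕ∞) (deriv c.τinv) :=
    (contDiff_infty_iff_deriv.mp (c.smooth_τinv.of_le (by simp))).2
  exact ((h1.comp (c.smooth_τ.of_le (by simp))).differentiable
    (by simp))

lemma christoffelT_transform (h h' : ℝ → ℝ) (hh : TemporalMetricLaw c h h')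
    (hsm : ContDiff ℝ (⊤ : ℕ∞) h) (hsm' : ContDiff ℝ (⊤ : ℕ∞) h') (hne : ∀ t, h t ≠ 0) (t : ℝ) :
    christoffelT h' (c.τ t) =
      christoffelT h t * c.dτinv t + deriv (fun s => c.dτinv s) t := by
  set di := c.dτinv t with hdi
  set D := deriv (fun s => c.dτinv s) t with hD
  have hdne : di ≠ 0 := dτinv_ne_zero c t
  have hprod : c.dτ t * di = 1 := dτ_mul_dτinv c t
  have hDd : HasDerivAt (fun s => c.dτinv s) D t :=
    ((differentiable_dτinv c) t).hasDerivAt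
  have hlhs : HasDerivAt (fun s => h' (c.τ s)) (deriv h' (c.τ t) * c.dτ t) t := by
    have h1 : HasDerivAt h' (deriv h' (c.τ t)) (c.τ t) :=
      ((hsm'.differentiable (by simp)) (c.τ t)).hasDerivAt
    exact h1.comp t (hasDerivAt_τ c t)
  have hrhs : HasDerivAt (fun s => h s * (c.dτinv s) ^ 2)
      (deriv h t * di ^ 2 + h t * (2 * di * D)) t := by
    have h1 : HasDerivAt h (deriv h t) t := ((hsm.differentiable (by simp)) t).hasDerivAt
    have h2 : HasDerivAt (fun s => (c.dτinv s) ^ 2) (2 * di * D) t := by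
      have := hDd.fun_pow 2
      simpa [hdi] using this
    simpa using h1.fun_mul h2
  have heq : (fun s => h' (c.τ s)) = fun s => h s * (c.dτinv s) ^ 2 := funext hh
  rw [heq] at hlhs
  have hder : deriv h' (c.τ t) * c.dτ t = deriv h t * di ^ 2 + h t * (2 * di * D) :=
    hlhs.unique hrhs
  have hval : h' (c.τ t) = h t * di ^ 2 := hh t
  have hderiv' : deriv h' (c.τ t) = (deriv h t * di ^ 2 + h t * (2 * di * D)) * di := by
    have h3 : deriv h' (c.τ t) * (c.dτ t * di)
        = (deriv h t * di ^ 2 + h t * (2 * di * D)) * di := by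
      rw [← mul_assoc, hder]
    rwa [hprod, mul_one] at h3
  rw [christoffelT, christoffelT, hderiv', hval]
  have h2ne : h t ≠ 0 := hne t
  field_simp

lemma temporal_law (h h' : ℝ → ℝ) (hh : TemporalMetricLaw c h h')
    (hsm : ContDiff ℝ (⊤ : ℕ∞) h) (hsm' : ContDiff ℝ (⊤ : ℕ∞) h') (hne : ∀ t, h t ≠ 0) :
    TemporalNLCLaw c
      (fun p i => -(christoffelT h p.1) * p.2.2 i)
      (fun p i => -(christoffelT h' p.1) * p.2.2 i) := by
  rintro ⟨t, x, y⟩ j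
  have hdd : DifferentiableAt ℝ (fun s => c.dτinv s) t := (differentiable_dτinv c) t
  have hpt : pt (fun q : J1 n => (∑ k, c.Jac j k q.2.1 * q.2.2 k) * c.dτinv q.1) (t, x, y)
      = (∑ k, c.Jac j k x * y k) * deriv (fun s => c.dτinv s) t := by
    have hfun : (fun s => (∑ k, c.Jac j k (s, x, y).2.1 * (s, x, y).2.2 k) * c.dτinv (s, x, y).1)
        = fun s => (∑ k, c.Jac j k x * y k) * c.dτinv s := rfl
    show deriv _ t = _
    rw [hfun, deriv_const_mul _ hdd]
  have hsum : (∑ k, -(christoffelT h t) * y k * c.dτinv t * c.Jac j k x)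
      = (-(christoffelT h t) * c.dτinv t) * ∑ k, c.Jac j k x * y k := by
    rw [Finset.mul_sum]
    exact Finset.sum_congr rfl fun k _ => by ring
  simp only [CoordChange.Φ, CoordChange.yc]
  rw [hpt, hsum, christoffelT_transform c h h' hh hsm hsm' hne t]
  have hprod := dτ_mul_dτinv c t
  linear_combination (-(christoffelT h t * c.dτinv t + deriv (fun s => c.dτinv s) t)
      * (∑ k, c.Jac j k x * y k)) * hprod

end Temporal


/-! ### Sum-shuffling algebra -/

section Algebra

-- rotate a triple sum
lemma sum3_rot (f : Fin n → Fin n → Fin n → ℝ) :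
    ∑ a, ∑ b, ∑ c, f a b c = ∑ b, ∑ c, ∑ a, f a b c := by
  rw [Finset.sum_comm]
  exact Finset.sum_congr rfl fun b _ => Finset.sum_comm

lemma christoffel_algebra (J g' g'i gi : Matrix (Fin n) (Fin n) ℝ)
    (P Q S : Fin n → Fin n → Fin n → ℝ)
    (hg'i : ∀ a b, g'i a b = ∑ u, ∑ v, J a u * gi u v * J b v)
    (hG1 : ∀ a b, (∑ k, g'i a k * g' k b) = if a = b then (1:ℝ) else 0)
    (hg's : ∀ a b, g' a b = g' b a)
    (hS : ∀ p a c, S p a c = S p c a)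
    (hE : ∀ a b i, P a b i = ∑ k, ∑ l,
      (((∑ m, Q k l m * J m i) * J k a + g' k l * S k a i) * J l b
        + (g' k l * J k a) * S l b i))
    (j i m : Fin n) :
    ∑ k, ∑ l, ((1/2 : ℝ) * ∑ cc, g'i j cc * (Q cc k l + Q cc l k - Q k l cc)) * J k i * J l m
      = (∑ k, ((1/2 : ℝ) * ∑ q, gi k q * (P q i m + P q m i - P i m q)) * J j k) - S j i m := by
  classical
  set B : Fin n → ℝ := fun q => ∑ p, J j p * gi p q with hB
  set V : Fin n → Fin n → ℝ := fun k β => ∑ q, B q * S k q β with hV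
  -- contraction of B with J gives g'i j ·
  have hBJ : ∀ k, ∑ q, B q * J k q = g'i j k := by
    intro k
    rw [hg'i, Finset.sum_comm]
    exact Finset.sum_congr rfl fun q _ => by rw [hB]; simp only []; rw [Finset.sum_mul]
  -- delta contraction with S
  have hdS : ∀ α β, (∑ l, (∑ k, g'i j k * g' k l) * S l α β) = S j α β := by
    intro α β
    have : ∀ l, (∑ k, g'i j k * g' k l) * S l α β
        = if j = l then S l α β else 0 := by
      intro l; rw [hG1]; split <;> simp
    rw [Finset.sum_congr rfl fun l _ => this l]
    simp
  -- first-slot contraction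
  have hBP1 : ∀ α β, ∑ q, B q * P q α β
      = (∑ k, ∑ l, g'i j k * (∑ mm, Q k l mm * J mm β) * J l α)
        + (∑ k, ∑ l, (g' k l * V k β) * J l α) + S j α β := by
    intro α β
    have e1 : ∑ q, B q * P q α β = ∑ k, ∑ l, ∑ q,
        ((∑ mm, Q k l mm * J mm β) * J l α * (B q * J k q)
          + (g' k l * J l α) * (B q * S k q β)
          + (g' k l * S l α β) * (B q * J k q)) := by
      rw [← sum3_rot fun q k l =>
        ((∑ mm, Q k l mm * J mm β) * J l α * (B q * J k q)
          + (g' k l * J l α) * (B q * S k q β)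
          + (g' k l * S l α β) * (B q * J k q))]
      refine Finset.sum_congr rfl fun q _ => ?_
      rw [hE q α β, Finset.mul_sum]
      refine Finset.sum_congr rfl fun k _ => ?_
      rw [Finset.mul_sum]
      refine Finset.sum_congr rfl fun l _ => ?_
      ring
    rw [e1]
    have e2 : ∀ k l, (∑ q,
        ((∑ mm, Q k l mm * J mm β) * J l α * (B q * J k q)
          + (g' k l * J l α) * (B q * S k q β)
          + (g' k l * S l α β) * (B q * J k q)))
        = g'i j k * (∑ mm, Q k l mm * J mm β) * J l α
          + (g' k l * V k β) * J l α
          + (g' k l * S l α β) * g'i j k := by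
      intro k l
      rw [Finset.sum_add_distrib, Finset.sum_add_distrib,
        ← Finset.mul_sum, ← Finset.mul_sum, ← Finset.mul_sum, hBJ k]
      rw [hV]; simp only []
      ring
    rw [Finset.sum_congr rfl fun k _ => Finset.sum_congr rfl fun l _ => e2 k l]
    have e3 : ∑ k, ∑ l, (g'i j k * (∑ mm, Q k l mm * J mm β) * J l α
          + (g' k l * V k β) * J l α
          + (g' k l * S l α β) * g'i j k)
        = (∑ k, ∑ l, g'i j k * (∑ mm, Q k l mm * J mm β) * J l α)
          + (∑ k, ∑ l, (g' k l * V k β) * J l α)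
          + (∑ k, ∑ l, (g' k l * S l α β) * g'i j k) := by
      rw [← Finset.sum_add_distrib, ← Finset.sum_add_distrib]
      refine Finset.sum_congr rfl fun k _ => ?_
      rw [← Finset.sum_add_distrib, ← Finset.sum_add_distrib]
    rw [e3]
    congr 1
    -- last term is the delta contraction
    rw [Finset.sum_comm]
    have : ∀ l, ∑ k, (g' k l * S l α β) * g'i j k
        = (∑ k, g'i j k * g' k l) * S l α β := by
      intro l; rw [Finset.sum_mul]; exact Finset.sum_congr rfl fun k _ => by ring
    rw [Finset.sum_congr rfl fun l _ => this l, hdS]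
  -- third-slot contraction
  have hBP3 : ∑ q, B q * P i m q
      = (∑ k, ∑ l, (∑ mm, Q k l mm * g'i j mm) * J k i * J l m)
        + (∑ k, ∑ l, (g' k l * V k i) * J l m)
        + (∑ k, ∑ l, (g' k l * J k i) * V l m) := by
    have e1 : ∑ q, B q * P i m q = ∑ k, ∑ l, ∑ q,
        ((∑ mm, Q k l mm * (B q * J mm q)) * J k i * J l m
          + (g' k l * J l m) * (B q * S k i q)
          + (g' k l * J k i) * (B q * S l m q)) := by
      rw [← sum3_rot fun q k l =>
        ((∑ mm, Q k l mm * (B q * J mm q)) * J k i * J l m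
          + (g' k l * J l m) * (B q * S k i q)
          + (g' k l * J k i) * (B q * S l m q))]
      refine Finset.sum_congr rfl fun q _ => ?_
      rw [hE i m q, Finset.mul_sum]
      refine Finset.sum_congr rfl fun k _ => ?_
      rw [Finset.mul_sum]
      refine Finset.sum_congr rfl fun l _ => ?_
      have hmm : (∑ mm, Q k l mm * (B q * J mm q)) = B q * (∑ mm, Q k l mm * J mm q) := by
        rw [Finset.mul_sum]; exact Finset.sum_congr rfl fun mm _ => by ring
      rw [hmm]; ring
    rw [e1]
    have e2 : ∀ k l, (∑ q,
        ((∑ mm, Q k l mm * (B q * J mm q)) * J k i * J l m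
          + (g' k l * J l m) * (B q * S k i q)
          + (g' k l * J k i) * (B q * S l m q)))
        = (∑ mm, Q k l mm * g'i j mm) * J k i * J l m
          + (g' k l * J l m) * V k i
          + (g' k l * J k i) * V l m := by
      intro k l
      have h1 : (∑ q, (∑ mm, Q k l mm * (B q * J mm q)) * J k i * J l m)
          = (∑ mm, Q k l mm * g'i j mm) * J k i * J l m := by
        rw [← Finset.sum_mul, ← Finset.sum_mul]
        congr 2
        rw [Finset.sum_comm]
        refine Finset.sum_congr rfl fun mm _ => ?_
        rw [← Finset.mul_sum, hBJ mm]
      have h2 : (∑ q, (g' k l * J l m) * (B q * S k i q)) = (g' k l * J l m) * V k i := by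
        rw [← Finset.mul_sum]
        congr 1
        show (∑ q, B q * S k i q) = ∑ q, B q * S k q i
        refine Finset.sum_congr rfl fun q _ => ?_
        rw [hS k i q]
      have h3 : (∑ q, (g' k l * J k i) * (B q * S l m q)) = (g' k l * J k i) * V l m := by
        rw [← Finset.mul_sum]
        congr 1
        show (∑ q, B q * S l m q) = ∑ q, B q * S l q m
        refine Finset.sum_congr rfl fun q _ => ?_
        rw [hS l m q]
      rw [Finset.sum_add_distrib, Finset.sum_add_distrib, h1, h2, h3]
    rw [Finset.sum_congr rfl fun k _ => Finset.sum_congr rfl fun l _ => e2 k l]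
    have e3 : ∑ k, ∑ l, ((∑ mm, Q k l mm * g'i j mm) * J k i * J l m
          + (g' k l * J l m) * V k i
          + (g' k l * J k i) * V l m)
        = (∑ k, ∑ l, (∑ mm, Q k l mm * g'i j mm) * J k i * J l m)
          + (∑ k, ∑ l, (g' k l * V k i) * J l m)
          + (∑ k, ∑ l, (g' k l * J k i) * V l m) := by
      rw [← Finset.sum_add_distrib, ← Finset.sum_add_distrib]
      refine Finset.sum_congr rfl fun k _ => ?_
      rw [← Finset.sum_add_distrib, ← Finset.sum_add_distrib]
      exact Finset.sum_congr rfl fun l _ => by ring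
    rw [e3]
  -- symmetry swap for the C-terms
  have hC14 : ∑ k, ∑ l, (g' k l * J k i) * V l m
      = ∑ k, ∑ l, (g' k l * V k m) * J l i := by
    rw [Finset.sum_comm]
    exact Finset.sum_congr rfl fun k _ => Finset.sum_congr rfl fun l _ => by
      rw [hg's l k]; ring
  -- assemble the right-hand side
  have hRHS : (∑ k, ((1/2 : ℝ) * ∑ q, gi k q * (P q i m + P q m i - P i m q)) * J j k)
      = (1/2 : ℝ) * ∑ q, B q * (P q i m + P q m i - P i m q) := by
    have e1 : ∀ k, ((1/2 : ℝ) * ∑ q, gi k q * (P q i m + P q m i - P i m q)) * J j k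
        = ∑ q, (1/2 : ℝ) * (J j k * gi k q * (P q i m + P q m i - P i m q)) := by
      intro k
      rw [Finset.mul_sum, Finset.sum_mul]
      exact Finset.sum_congr rfl fun q _ => by ring
    rw [Finset.sum_congr rfl fun k _ => e1 k, Finset.sum_comm, Finset.mul_sum]
    refine Finset.sum_congr rfl fun q _ => ?_
    rw [hB]; simp only []
    rw [Finset.sum_mul, Finset.mul_sum]
  have hsplit : ∑ q, B q * (P q i m + P q m i - P i m q)
      = (∑ q, B q * P q i m) + (∑ q, B q * P q m i) - (∑ q, B q * P i m q) := by
    rw [← Finset.sum_add_distrib, ← Finset.sum_sub_distrib]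
    exact Finset.sum_congr rfl fun q _ => by ring
  -- assemble the left-hand side
  have t1 : ∑ k, ∑ l, (g'i j k * (∑ mm, Q k l mm * J mm m)) * J l i
      = ∑ k, ∑ l, ∑ cc, g'i j cc * Q cc k l * J k i * J l m := by
    rw [← sum3_rot fun cc k l => g'i j cc * Q cc k l * J k i * J l m]
    refine Finset.sum_congr rfl fun cc _ => ?_
    refine Finset.sum_congr rfl fun k _ => ?_
    rw [Finset.mul_sum, Finset.sum_mul]
    refine Finset.sum_congr rfl fun l _ => by ring
  have t2 : ∑ k, ∑ l, (g'i j k * (∑ mm, Q k l mm * J mm i)) * J l m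
      = ∑ k, ∑ l, ∑ cc, g'i j cc * Q cc l k * J k i * J l m := by
    rw [← sum3_rot fun cc k l => g'i j cc * Q cc l k * J k i * J l m]
    refine Finset.sum_congr rfl fun cc _ => ?_
    rw [Finset.sum_comm]
    refine Finset.sum_congr rfl fun l _ => ?_
    rw [Finset.mul_sum, Finset.sum_mul]
    refine Finset.sum_congr rfl fun k _ => by ring
  have t3 : ∑ k, ∑ l, (∑ mm, Q k l mm * g'i j mm) * J k i * J l m
      = ∑ k, ∑ l, ∑ cc, g'i j cc * Q k l cc * J k i * J l m := by
    refine Finset.sum_congr rfl fun k _ => Finset.sum_congr rfl fun l _ => ?_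
    rw [Finset.sum_mul, Finset.sum_mul]
    refine Finset.sum_congr rfl fun cc _ => by ring
  have hmerge : (∑ k, ∑ l, ∑ cc, g'i j cc * Q cc k l * J k i * J l m)
      + (∑ k, ∑ l, ∑ cc, g'i j cc * Q cc l k * J k i * J l m)
      - (∑ k, ∑ l, ∑ cc, g'i j cc * Q k l cc * J k i * J l m)
      = ∑ k, ∑ l, ∑ cc, (g'i j cc * Q cc k l * J k i * J l m
          + g'i j cc * Q cc l k * J k i * J l m
          - g'i j cc * Q k l cc * J k i * J l m) := by
    rw [← Finset.sum_add_distrib, ← Finset.sum_sub_distrib]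
    refine Finset.sum_congr rfl fun k _ => ?_
    rw [← Finset.sum_add_distrib, ← Finset.sum_sub_distrib]
    refine Finset.sum_congr rfl fun l _ => ?_
    rw [← Finset.sum_add_distrib, ← Finset.sum_sub_distrib]
  have hLHS : ∑ k, ∑ l, ((1/2 : ℝ) * ∑ cc, g'i j cc * (Q cc k l + Q cc l k - Q k l cc)) * J k i * J l m
      = (1/2 : ℝ) * ((∑ k, ∑ l, (g'i j k * (∑ mm, Q k l mm * J mm m)) * J l i)
          + (∑ k, ∑ l, (g'i j k * (∑ mm, Q k l mm * J mm i)) * J l m)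
          - (∑ k, ∑ l, (∑ mm, Q k l mm * g'i j mm) * J k i * J l m)) := by
    rw [t1, t2, t3, hmerge, Finset.mul_sum]
    refine Finset.sum_congr rfl fun k _ => ?_
    rw [Finset.mul_sum]
    refine Finset.sum_congr rfl fun l _ => ?_
    rw [Finset.mul_sum, Finset.sum_mul, Finset.sum_mul, Finset.mul_sum]
    refine Finset.sum_congr rfl fun cc _ => by ring
  rw [hLHS, hRHS, hsplit, hBP1 i m, hBP1 m i, hBP3, hC14, hS j m i]
  ring


end Algebra

/-! ### Spatial lemmas -/

section Spatial

variable (c : CoordChange n)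

lemma pX_hasDerivAt' {f : Vec n → ℝ} {x : Vec n} (hf : DifferentiableAt ℝ f x) (j : Fin n) :
    HasDerivAt (fun s => f (Function.update x j s)) (pX f j x) (x j) := by
  rw [pX_eq hf j]; exact pX_hasDerivAt hf j

lemma smooth_σk (k : Fin n) : ContDiff ℝ (⊤ : ℕ∞) (fun z => c.σ z k) := contDiff_pi.mp c.smooth_σ k

lemma smooth_σinvk (k : Fin n) : ContDiff ℝ (⊤ : ℕ∞) (fun z => c.σinv z k) :=
  contDiff_pi.mp c.smooth_σinv k

lemma diff_σk (k : Fin n) (z : Vec n) : DifferentiableAt ℝ (fun w => c.σ w k) z :=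
  ((smooth_σk c k).differentiable (by simp)) z

lemma diff_σinvk (k : Fin n) (z : Vec n) : DifferentiableAt ℝ (fun w => c.σinv w k) z :=
  ((smooth_σinvk c k).differentiable (by simp)) z

lemma smooth_Jac (k a : Fin n) : ContDiff ℝ (⊤ : ℕ∞) (fun z => c.Jac k a z) :=
  contDiff_pX _ (smooth_σk c k) a

lemma hKJ (z : Vec n) (a b : Fin n) :
    ∑ k, c.JacInv a k z * c.Jac k b z = if a = b then (1:ℝ) else 0 := by
  have hcomp := pX_comp (fun w => c.σinv w a) c.σ z (diff_σinvk c a (c.σ z))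
      (fun k => diff_σk c k z) b
  have hid : (fun w => c.σinv (c.σ w) a) = fun w : Vec n => w a :=
    funext fun w => congrFun (c.left_σ w) a
  rw [hid, pX_coord] at hcomp
  exact hcomp.symm

lemma hJK (z : Vec n) (a b : Fin n) :
    ∑ k, c.Jac a k z * c.JacInv k b z = if a = b then (1:ℝ) else 0 := by
  have hcomp := pX_comp (fun w => c.σ w a) c.σinv (c.σ z)
      (by rw [c.left_σ z]; exact diff_σk c a z)
      (fun k => diff_σinvk c k (c.σ z)) b
  have hid : (fun w => c.σ (c.σinv w) a) = fun w : Vec n => w a :=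
    funext fun w => congrFun (c.right_σ w) a
  rw [hid, pX_coord, c.left_σ z] at hcomp
  exact hcomp.symm

lemma S_symm (p a cc : Fin n) (x : Vec n) :
    pX (fun z => c.Jac p a z) cc x = pX (fun z => c.Jac p cc z) a x :=
  pX_pX_symm (fun z => c.σ z p) (smooth_σk c p) x a cc

end Spatial

/-! ### The spatial law -/

section SpatialLaw

open Matrix

variable (c : CoordChange n)

lemma spatial_law (φ φ' : Vec n → Matrix (Fin n) (Fin n) ℝ)
    (hφ : SpatialMetricLaw c φ φ')
    (φsm : ∀ i j, ContDiff ℝ (⊤ : ℕ∞) (fun x => φ x i j))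
    (φsm' : ∀ i j, ContDiff ℝ (⊤ : ℕ∞) (fun x => φ' x i j))
    (φ'symm : ∀ x i j, φ' x i j = φ' x j i)
    (φunit : ∀ x, IsUnit (φ x).det) (φ'unit : ∀ x, IsUnit (φ' x).det) :
    SpatialNLCLaw c
      (fun p i j => ∑ k, christoffelS φ i j k p.2.1 * p.2.2 k)
      (fun p i j => ∑ k, christoffelS φ' i j k p.2.1 * p.2.2 k) := by
  -- matrix-valued Jacobians
  set Jm : Vec n → Matrix (Fin n) (Fin n) ℝ := fun z => Matrix.of fun a b => c.Jac a b z with hJm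
  set Km : Vec n → Matrix (Fin n) (Fin n) ℝ := fun z => Matrix.of fun a b => c.JacInv a b z with hKm
  have hKJm : ∀ z, Km z * Jm z = 1 := by
    intro z
    ext a b
    rw [Matrix.mul_apply, Matrix.one_apply]
    simp only [hJm, hKm, Matrix.of_apply]
    exact hKJ c z a b
  have hΨ : ∀ z, φ' (c.σ z) = (Km z)ᵀ * φ z * Km z := by
    intro z
    ext a b
    rw [hφ z a b, Matrix.mul_apply, Finset.sum_comm]
    refine Finset.sum_congr rfl fun l _ => ?_
    rw [Matrix.mul_apply, Finset.sum_mul]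
    refine Finset.sum_congr rfl fun k _ => ?_
    simp only [hJm, hKm, Matrix.of_apply, Matrix.transpose_apply]
    ring
  have hCm : ∀ z, (Jm z)ᵀ * φ' (c.σ z) * Jm z = φ z := by
    intro z
    rw [hΨ z]
    have h1 : (Jm z)ᵀ * (Km z)ᵀ = 1 := by
      rw [← Matrix.transpose_mul, hKJm z, Matrix.transpose_one]
    calc (Jm z)ᵀ * ((Km z)ᵀ * φ z * Km z) * Jm z
        = ((Jm z)ᵀ * (Km z)ᵀ) * φ z * (Km z * Jm z) := by noncomm_ring
      _ = φ z := by rw [h1, hKJm z, one_mul, mul_one]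
  have hC : ∀ z a b, φ z a b
      = ∑ k, ∑ l, φ' (c.σ z) k l * c.Jac k a z * c.Jac l b z := by
    intro z a b
    conv_lhs => rw [← hCm z]
    rw [Matrix.mul_apply, Finset.sum_comm]
    refine Finset.sum_congr rfl fun l _ => ?_
    rw [Matrix.mul_apply, Finset.sum_mul]
    refine Finset.sum_congr rfl fun k _ => ?_
    simp only [hJm, Matrix.of_apply, Matrix.transpose_apply]
    ring
  rintro ⟨t, x, y⟩ j i
  -- local data at x
  have hg'i : ∀ a b, (φ' (c.σ x))⁻¹ a b
      = ∑ u, ∑ v, c.Jac a u x * (φ x)⁻¹ u v * c.Jac b v x := by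
    intro a b
    have hinv : (φ' (c.σ x))⁻¹ = Jm x * (φ x)⁻¹ * (Jm x)ᵀ := by
      rw [hΨ x, Matrix.mul_inv_rev, Matrix.mul_inv_rev,
        Matrix.inv_eq_right_inv (hKJm x), ← Matrix.transpose_nonsing_inv,
        Matrix.inv_eq_right_inv (hKJm x), Matrix.mul_assoc]
    rw [hinv, Matrix.mul_apply, Finset.sum_comm]
    refine Finset.sum_congr rfl fun v _ => ?_
    rw [Matrix.mul_apply, Finset.sum_mul]
    refine Finset.sum_congr rfl fun u _ => ?_
    simp only [hJm, Matrix.of_apply, Matrix.transpose_apply]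
  have hG1 : ∀ a b, (∑ k, (φ' (c.σ x))⁻¹ a k * φ' (c.σ x) k b) = if a = b then (1:ℝ) else 0 := by
    intro a b
    calc ∑ k, (φ' (c.σ x))⁻¹ a k * φ' (c.σ x) k b
        = ((φ' (c.σ x))⁻¹ * φ' (c.σ x)) a b := (Matrix.mul_apply).symm
      _ = (1 : Matrix (Fin n) (Fin n) ℝ) a b := by
          rw [Matrix.nonsing_inv_mul _ (φ'unit (c.σ x))]
      _ = if a = b then (1:ℝ) else 0 := Matrix.one_apply
  -- the differentiated metric law
  have hE : ∀ a b i₀, pX (fun z => φ z a b) i₀ x = ∑ k, ∑ l,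
      ((((∑ m, pX (fun z => φ' z k l) m (c.σ x) * c.Jac m i₀ x) * c.Jac k a x
          + φ' (c.σ x) k l * pX (fun z => c.Jac k a z) i₀ x) * c.Jac l b x)
        + (φ' (c.σ x) k l * c.Jac k a x) * pX (fun z => c.Jac l b z) i₀ x) := by
    intro a b i₀
    have hL : HasDerivAt (fun s => φ (Function.update x i₀ s) a b)
        (pX (fun z => φ z a b) i₀ x) (x i₀) :=
      pX_hasDerivAt' (((φsm a b).differentiable (by simp)) x) i₀
    have hR : HasDerivAt
        (fun s => ∑ k, ∑ l, φ' (c.σ (Function.update x i₀ s)) k l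
            * c.Jac k a (Function.update x i₀ s) * c.Jac l b (Function.update x i₀ s))
        (∑ k, ∑ l,
          ((((∑ m, pX (fun z => φ' z k l) m (c.σ x) * c.Jac m i₀ x) * c.Jac k a x
              + φ' (c.σ x) k l * pX (fun z => c.Jac k a z) i₀ x) * c.Jac l b x)
            + (φ' (c.σ x) k l * c.Jac k a x) * pX (fun z => c.Jac l b z) i₀ x)) (x i₀) := by
      refine HasDerivAt.fun_sum fun k _ => HasDerivAt.fun_sum fun l _ => ?_
      have h1 : HasDerivAt (fun s => φ' (c.σ (Function.update x i₀ s)) k l)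
          (∑ m, pX (fun z => φ' z k l) m (c.σ x) * c.Jac m i₀ x) (x i₀) :=
        pX_comp_hasDerivAt (fun w => φ' w k l) c.σ x (((φsm' k l).differentiable (by simp)) (c.σ x))
          (fun m => diff_σk c m x) i₀
      have h2 : HasDerivAt (fun s => c.Jac k a (Function.update x i₀ s))
          (pX (fun z => c.Jac k a z) i₀ x) (x i₀) :=
        pX_hasDerivAt' (((smooth_Jac c k a).differentiable (by simp)) x) i₀
      have h3 : HasDerivAt (fun s => c.Jac l b (Function.update x i₀ s))
          (pX (fun z => c.Jac l b z) i₀ x) (x i₀) :=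
        pX_hasDerivAt' (((smooth_Jac c l b).differentiable (by simp)) x) i₀
      have h4 := (h1.fun_mul h2).fun_mul h3
      rw [Function.update_eq_self i₀ x] at h4
      exact h4
    have hfe : (fun s => φ (Function.update x i₀ s) a b)
        = fun s => ∑ k, ∑ l, φ' (c.σ (Function.update x i₀ s)) k l
            * c.Jac k a (Function.update x i₀ s) * c.Jac l b (Function.update x i₀ s) :=
      funext fun s => hC (Function.update x i₀ s) a b
    rw [hfe] at hL
    exact hL.unique hR
  -- the key transformation identity, from the algebra lemma
  have key : ∀ mm, ∑ k, ∑ l, christoffelS φ' j k l (c.σ x) * c.Jac k i x * c.Jac l mm x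
      = (∑ k, christoffelS φ k i mm x * c.Jac j k x)
        - pX (fun z => c.Jac j i z) mm x := by
    intro mm
    exact christoffel_algebra (Matrix.of fun a b => c.Jac a b x) (φ' (c.σ x)) (φ' (c.σ x))⁻¹
      ((φ x)⁻¹)
      (fun a b cc => pX (fun z => φ z a b) cc x)
      (fun a b cc => pX (fun z => φ' z a b) cc (c.σ x))
      (fun p a cc => pX (fun z => c.Jac p a z) cc x)
      hg'i hG1 (fun a b => φ'symm (c.σ x) a b) (fun p a cc => S_symm c p a cc x)
      hE j i mm
  -- compute the px-term
  have hdd : DifferentiableAt ℝ (fun s => c.dτinv s) t := (differentiable_dτinv c) t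
  have hpx : px (fun q : J1 n => (∑ l, c.Jac j l q.2.1 * q.2.2 l) * c.dτinv q.1) i (t, x, y)
      = (∑ k, pX (fun z => c.Jac j k z) i x * y k) * c.dτinv t := by
    show deriv (fun s => (∑ l, c.Jac j l (Function.update x i s) * y l) * c.dτinv t) (x i) = _
    refine HasDerivAt.deriv ?_
    refine HasDerivAt.mul_const ?_ (c.dτinv t)
    refine HasDerivAt.fun_sum fun k _ => ?_
    exact (pX_hasDerivAt' (((smooth_Jac c j k).differentiable (by simp)) x) i).mul_const (y k)
  simp only [CoordChange.Φ, CoordChange.yc]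
  rw [hpx]
  -- assemble
  have eL : ∑ k, (∑ l, christoffelS φ' j k l (c.σ x)
        * ((∑ mm, c.Jac l mm x * y mm) * c.dτinv t)) * c.Jac k i x
      = ∑ mm, (∑ k, ∑ l, christoffelS φ' j k l (c.σ x) * c.Jac k i x * c.Jac l mm x)
          * (y mm * c.dτinv t) := by
    have e1 : ∀ k, (∑ l, christoffelS φ' j k l (c.σ x)
          * ((∑ mm, c.Jac l mm x * y mm) * c.dτinv t)) * c.Jac k i x
        = ∑ l, ∑ mm, christoffelS φ' j k l (c.σ x) * c.Jac k i x * c.Jac l mm x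
            * (y mm * c.dτinv t) := by
      intro k
      rw [Finset.sum_mul]
      refine Finset.sum_congr rfl fun l _ => ?_
      rw [Finset.sum_mul, Finset.mul_sum, Finset.sum_mul]
      refine Finset.sum_congr rfl fun mm _ => by ring
    rw [Finset.sum_congr rfl fun k _ => e1 k]
    rw [← sum3_rot fun mm k l => christoffelS φ' j k l (c.σ x) * c.Jac k i x * c.Jac l mm x
        * (y mm * c.dτinv t)]
    refine Finset.sum_congr rfl fun mm _ => ?_
    rw [Finset.sum_mul]
    refine Finset.sum_congr rfl fun k _ => ?_
    rw [Finset.sum_mul]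
  have eR : ∑ k, (∑ l, christoffelS φ k i l x * y l) * c.dτinv t * c.Jac j k x
      = ∑ mm, (∑ k, christoffelS φ k i mm x * c.Jac j k x) * (y mm * c.dτinv t) := by
    have e2 : ∀ k, (∑ l, christoffelS φ k i l x * y l) * c.dτinv t * c.Jac j k x
        = ∑ l, (christoffelS φ k i l x * c.Jac j k x) * (y l * c.dτinv t) := by
      intro k
      rw [Finset.sum_mul, Finset.sum_mul]
      refine Finset.sum_congr rfl fun l _ => by ring
    rw [Finset.sum_congr rfl fun k _ => e2 k, Finset.sum_comm]
    refine Finset.sum_congr rfl fun mm _ => ?_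
    rw [Finset.sum_mul]
  have eC : (∑ k, pX (fun z => c.Jac j k z) i x * y k) * c.dτinv t
      = ∑ mm, pX (fun z => c.Jac j i z) mm x * (y mm * c.dτinv t) := by
    rw [Finset.sum_mul]
    refine Finset.sum_congr rfl fun mm _ => ?_
    rw [S_symm c j mm i x]
    ring
  rw [eL, eR, eC, ← Finset.sum_sub_distrib]
  refine Finset.sum_congr rfl fun mm _ => ?_
  rw [key mm]
  ring

end SpatialLaw

/-- The local components `M⁽ⁱ⁾₍₁₎₁ = −H¹₁₁ yⁱ` and `N⁽ⁱ⁾₍₁₎ⱼ = γⁱⱼₖ yᵏ`,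
built from the Christoffel symbols of a temporal metric `h` and a spatial metric `φ`,
satisfy respectively the temporal and the spatial nonlinear connection transformation laws;
hence `Γ₀ = (M⁽ⁱ⁾₍₁₎₁, N⁽ⁱ⁾₍₁₎ⱼ)` is a nonlinear connection on `J¹(ℝ,M)`
(the canonical nonlinear connection attached to the pair `(h,φ)`). -/
theorem canonical_nonlinear_connection_of_metrics
    {n : ℕ} (c : CoordChange n) (h h' : ℝ → ℝ)
    (φ φ' : Vec n → Matrix (Fin n) (Fin n) ℝ)
    (hh : TemporalMetricLaw c h h') (hφ : SpatialMetricLaw c φ φ')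
    (hsm : ContDiff ℝ (⊤ : ℕ∞) h) (hsm' : ContDiff ℝ (⊤ : ℕ∞) h')
    (φsm : ∀ i j, ContDiff ℝ (⊤ : ℕ∞) (fun x => φ x i j))
    (φsm' : ∀ i j, ContDiff ℝ (⊤ : ℕ∞) (fun x => φ' x i j))
    (hne : ∀ t, h t ≠ 0) (hne' : ∀ t, h' t ≠ 0)
    (φsymm : ∀ x i j, φ x i j = φ x j i) (φ'symm : ∀ x i j, φ' x i j = φ' x j i)
    (φunit : ∀ x, IsUnit (φ x).det) (φ'unit : ∀ x, IsUnit (φ' x).det) :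
    TemporalNLCLaw c
      (fun p i => -(christoffelT h p.1) * p.2.2 i)
      (fun p i => -(christoffelT h' p.1) * p.2.2 i) ∧
    SpatialNLCLaw c
      (fun p i j => ∑ k, christoffelS φ i j k p.2.1 * p.2.2 k)
      (fun p i j => ∑ k, christoffelS φ' i j k p.2.1 * p.2.2 k) := by
  constructor
  · exact temporal_law c h h' hh hsm hsm' hne
  · exact spatial_law c φ φ' hφ φsm φsm' φ'symm φunit φ'unit

end Jet
end
end
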